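/- Suppose p(s), q(s) are smooth with q nonvanishing and satisfy q(q'' + 2 p' q + 5 q' p + 6 p² q) + c₁ (q' + 2 p q)² − c₂ q³ = 0 for constants c₁, c₂. Let w, w̃ be linearly independent solutions of w'' + p w' + q w = 0 with Wronskian W ≠ 0 and w ≠ 0, and set z = w̃/w, g = w w'/W (as a function of z). Then g satisfies the third-order ODE (g' − g²)(g''' − 12 g g'' − 6 (g')² + 48 g² g' − 24 g⁴) + c₁ (g'' − 6 g g' + 4 g³)² + c₂ (g' − g²)³ = 0. -/

import Mathlib

/-!
Put `y = w'/w` and `ℓ = w²/W`. The linear equation turns into the Riccati equation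
`y' = -(y² + p y + q)`, and Abel's identity `W' = -p W` gives `ℓ' = (2y + p) ℓ`. Since
`d/dz = ℓ d/ds` sends `ℓ^k F` to `ℓ^(k+1) (k (2y + p) F + F')`, one finds `g = ℓ y`,
`g' = ℓ² (y² - q)`, `g'' = ℓ³ (2y³ - 6qy - (q' + 2pq))` and a similar quartic for `g'''`.
In the three combinations `g' - g²`, `g'' - 6gg' + 4g³` and
`g''' - 12gg'' - 6g'² + 48g²g' - 24g⁴` the variable `y` cancels, leaving `-ℓ² q`,
`-ℓ³ (q' + 2pq)` and `-ℓ⁴ (q'' + 2p'q + 5q'p + 6p²q)`, so the left side of the third-order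
equation is `ℓ⁶` times the left side of the constraint.
-/

open Filter Topology

theorem hasDerivAt_wronskian {p q w w' w'' wt wt' wt'' : ℝ → ℝ} {s : ℝ}
    (hw : HasDerivAt w (w' s) s) (hw' : HasDerivAt w' (w'' s) s)
    (hwt : HasDerivAt wt (wt' s) s) (hwt' : HasDerivAt wt' (wt'' s) s)
    (hODEw : w'' s + p s * w' s + q s * w s = 0)
    (hODEwt : wt'' s + p s * wt' s + q s * wt s = 0) :
    HasDerivAt (fun u => wt' u * w u - w' u * wt u)
      (-p s * (wt' s * w s - w' s * wt s)) s :=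
  (hwt'.mul hw).sub (hw'.mul hwt) |>.congr_deriv <| by
    linear_combination w s * hODEwt - wt s * hODEw

theorem hasDerivAt_div_of_linear_ode {p q w w' w'' : ℝ → ℝ} {s : ℝ}
    (hw : HasDerivAt w (w' s) s) (hw' : HasDerivAt w' (w'' s) s)
    (hODE : w'' s + p s * w' s + q s * w s = 0) (hw0 : w s ≠ 0) :
    HasDerivAt (fun u => w' u / w u)
      (-((w' s / w s) ^ 2 + p s * (w' s / w s) + q s)) s :=
  hw'.div hw hw0 |>.congr_deriv <| by
    field_simp
    linear_combination w s * hODE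

theorem hasDerivAt_sq_div {p w w' W : ℝ → ℝ} {s : ℝ}
    (hw : HasDerivAt w (w' s) s) (hW : HasDerivAt W (-p s * W s) s)
    (hw0 : w s ≠ 0) (hW0 : W s ≠ 0) :
    HasDerivAt (fun u => w u ^ 2 / W u)
      ((2 * (w' s / w s) + p s) * (w s ^ 2 / W s)) s :=
  (hw.fun_pow 2).div hW hW0 |>.congr_deriv <| by
    field_simp
    ring

theorem mul_deriv_eq_of_eqOn_pow_mul {I : Set ℝ} (hI : IsOpen I)
    {G dG ℓ m F dF : ℝ → ℝ} (k : ℕ)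
    (hG : ∀ s ∈ I, G s = ℓ s ^ (k + 1) * F s) (hdG : ∀ s ∈ I, HasDerivAt G (dG s) s)
    (hℓ : ∀ s ∈ I, HasDerivAt ℓ (m s * ℓ s) s) (hF : ∀ s ∈ I, HasDerivAt F (dF s) s) :
    ∀ s ∈ I, ℓ s * dG s = ℓ s ^ (k + 2) * ((k + 1) * m s * F s + dF s) := by
  intro s hs
  have hGF : G =ᶠ[𝓝 s] fun u => ℓ u ^ (k + 1) * F u :=
    eventually_of_mem (hI.mem_nhds hs) hG
  have hG' := (((hℓ s hs).fun_pow (k + 1)).mul (hF s hs)).congr_of_eventuallyEq hGF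
  rw [(hdG s hs).unique hG']
  simp only [Nat.add_sub_cancel]
  push_cast
  ring

theorem relative_invariants_of_riccati {I : Set ℝ} (hI : IsOpen I)
    {p p' q q' q'' y ℓ g dg g1 dg1 g2 dg2 g3 : ℝ → ℝ}
    (hp : ∀ s ∈ I, HasDerivAt p (p' s) s)
    (hq : ∀ s ∈ I, HasDerivAt q (q' s) s)
    (hq' : ∀ s ∈ I, HasDerivAt q' (q'' s) s)
    (hy : ∀ s ∈ I, HasDerivAt y (-(y s ^ 2 + p s * y s + q s)) s)
    (hℓ : ∀ s ∈ I, HasDerivAt ℓ ((2 * y s + p s) * ℓ s) s)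
    (hg : ∀ s ∈ I, g s = ℓ s * y s) (hdg : ∀ s ∈ I, HasDerivAt g (dg s) s)
    (hg1 : ∀ s ∈ I, g1 s = ℓ s * dg s) (hdg1 : ∀ s ∈ I, HasDerivAt g1 (dg1 s) s)
    (hg2 : ∀ s ∈ I, g2 s = ℓ s * dg1 s) (hdg2 : ∀ s ∈ I, HasDerivAt g2 (dg2 s) s)
    (hg3 : ∀ s ∈ I, g3 s = ℓ s * dg2 s) :
    ∀ s ∈ I, g1 s - g s ^ 2 = -(ℓ s ^ 2 * q s) ∧
      g2 s - 6 * g s * g1 s + 4 * g s ^ 3 = -(ℓ s ^ 3 * (q' s + 2 * p s * q s)) ∧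
      g3 s - 12 * g s * g2 s - 6 * g1 s ^ 2 + 48 * g s ^ 2 * g1 s - 24 * g s ^ 4 =
        -(ℓ s ^ 4 * (q'' s + 2 * p' s * q s + 5 * q' s * p s + 6 * p s ^ 2 * q s)) := by
  have hg1y : ∀ s ∈ I, g1 s = ℓ s ^ 2 * (y s ^ 2 - q s) := by
    intro s hs
    rw [hg1 s hs, mul_deriv_eq_of_eqOn_pow_mul hI 0 (fun s hs => by rw [hg s hs]; ring)
      hdg hℓ hy s hs]
    ring
  have hg2y : ∀ s ∈ I,
      g2 s = ℓ s ^ 3 * (2 * y s ^ 3 - 6 * q s * y s - (q' s + 2 * p s * q s)) := by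
    intro s hs
    rw [hg2 s hs, mul_deriv_eq_of_eqOn_pow_mul hI 1 hg1y hdg1 hℓ
      (fun s hs => ((hy s hs).fun_pow 2).sub (hq s hs)) s hs]
    ring
  have hg3y : ∀ s ∈ I, g3 s = ℓ s ^ 4 * (6 * y s ^ 4 - 36 * q s * y s ^ 2
      - 12 * (q' s + 2 * p s * q s) * y s
      + (6 * q s ^ 2 - q'' s - 2 * p' s * q s - 5 * p s * q' s - 6 * p s ^ 2 * q s)) := by
    intro s hs
    rw [hg3 s hs, mul_deriv_eq_of_eqOn_pow_mul hI 2 hg2y hdg2 hℓ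
      (fun s hs => ((((hy s hs).fun_pow 3).const_mul 2).sub
        (((hq s hs).const_mul 6).mul (hy s hs))).sub
        ((hq' s hs).add (((hp s hs).const_mul 2).mul (hq s hs)))) s hs]
    ring
  intro s hs
  rw [hg s hs, hg1y s hs, hg2y s hs, hg3y s hs]
  exact ⟨by ring, by ring, by ring⟩

theorem abel_linearisation_third_order_ode_general
    (c₁ c₂ : ℝ) (I : Set ℝ) (hI : IsOpen I)
    (p p' q q' q'' w w' w'' wt wt' wt'' g dg g1 dg1 g2 dg2 g3 : ℝ → ℝ)
    (hp : ∀ s ∈ I, HasDerivAt p (p' s) s)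
    (hq : ∀ s ∈ I, HasDerivAt q (q' s) s)
    (hq' : ∀ s ∈ I, HasDerivAt q' (q'' s) s)
    (hw : ∀ s ∈ I, HasDerivAt w (w' s) s)
    (hw' : ∀ s ∈ I, HasDerivAt w' (w'' s) s)
    (hwt : ∀ s ∈ I, HasDerivAt wt (wt' s) s)
    (hwt' : ∀ s ∈ I, HasDerivAt wt' (wt'' s) s)
    (hODEw : ∀ s ∈ I, w'' s + p s * w' s + q s * w s = 0)
    (hODEwt : ∀ s ∈ I, wt'' s + p s * wt' s + q s * wt s = 0)
    (hw0 : ∀ s ∈ I, w s ≠ 0)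
    (hW0 : ∀ s ∈ I, wt' s * w s - w' s * wt s ≠ 0)
    (hconstraint : ∀ s ∈ I,
      q s * (q'' s + 2 * p' s * q s + 5 * q' s * p s + 6 * (p s) ^ 2 * q s)
        + c₁ * (q' s + 2 * p s * q s) ^ 2 - c₂ * (q s) ^ 3 = 0)
    (hg : ∀ s ∈ I, g s = w s * w' s / (wt' s * w s - w' s * wt s))
    (hdg : ∀ s ∈ I, HasDerivAt g (dg s) s)
    (hg1 : ∀ s ∈ I, g1 s = (w s) ^ 2 / (wt' s * w s - w' s * wt s) * dg s)
    (hdg1 : ∀ s ∈ I, HasDerivAt g1 (dg1 s) s)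
    (hg2 : ∀ s ∈ I, g2 s = (w s) ^ 2 / (wt' s * w s - w' s * wt s) * dg1 s)
    (hdg2 : ∀ s ∈ I, HasDerivAt g2 (dg2 s) s)
    (hg3 : ∀ s ∈ I, g3 s = (w s) ^ 2 / (wt' s * w s - w' s * wt s) * dg2 s) :
    ∀ s ∈ I,
      (g1 s - (g s) ^ 2) *
          (g3 s - 12 * g s * g2 s - 6 * (g1 s) ^ 2
            + 48 * (g s) ^ 2 * g1 s - 24 * (g s) ^ 4)
        + c₁ * (g2 s - 6 * g s * g1 s + 4 * (g s) ^ 3) ^ 2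
        + c₂ * (g1 s - (g s) ^ 2) ^ 3 = 0 := by
  have hy := fun s hs =>
    hasDerivAt_div_of_linear_ode (hw s hs) (hw' s hs) (hODEw s hs) (hw0 s hs)
  have hℓ := fun s hs => hasDerivAt_sq_div (hw s hs)
    (hasDerivAt_wronskian (hw s hs) (hw' s hs) (hwt s hs) (hwt' s hs) (hODEw s hs) (hODEwt s hs))
    (hw0 s hs) (hW0 s hs)
  have hgy : ∀ s ∈ I, g s = w s ^ 2 / (wt' s * w s - w' s * wt s) * (w' s / w s) := by
    intro s hs
    rw [hg s hs]
    field_simp [hw0 s hs]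
  intro s hs
  obtain ⟨hA, hB, hC⟩ :=
    relative_invariants_of_riccati hI hp hq hq' hy hℓ hgy hdg hg1 hdg1 hg2 hdg2 hg3 s hs
  rw [hA, hB, hC]
  linear_combination (w s ^ 2 / (wt' s * w s - w' s * wt s)) ^ 6 * hconstraint s hs

/-- if the coefficients `p, q` of the linear equation
`w'' + p w' + q w = 0` satisfy the constraint
`q(q'' + 2p'q + 5q'p + 6p²q) + c₁(q' + 2pq)² − c₂ q³ = 0`, then
`g = w w'/W`, as a function of `z = w̃/w` (so `d/dz = (w²/W)·d/ds`),
satisfies the third-order ODE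
`(g'−g²)(g'''−12gg''−6(g')²+48g²g'−24g⁴) + c₁(g''−6gg'+4g³)² + c₂(g'−g²)³ = 0`. -/
theorem abel_linearisation_third_order_ode
    (c₁ c₂ : ℝ) (I : Set ℝ) (hI : IsOpen I)
    (p p' q q' q'' w w' w'' wt wt' wt'' g dg g1 dg1 g2 dg2 g3 : ℝ → ℝ)
    (hq0 : ∀ s ∈ I, q s ≠ 0)
    (hp : ∀ s ∈ I, HasDerivAt p (p' s) s)
    (hq : ∀ s ∈ I, HasDerivAt q (q' s) s)
    (hq' : ∀ s ∈ I, HasDerivAt q' (q'' s) s)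
    (hw : ∀ s ∈ I, HasDerivAt w (w' s) s)
    (hw' : ∀ s ∈ I, HasDerivAt w' (w'' s) s)
    (hwt : ∀ s ∈ I, HasDerivAt wt (wt' s) s)
    (hwt' : ∀ s ∈ I, HasDerivAt wt' (wt'' s) s)
    (hODEw : ∀ s ∈ I, w'' s + p s * w' s + q s * w s = 0)
    (hODEwt : ∀ s ∈ I, wt'' s + p s * wt' s + q s * wt s = 0)
    (hw0 : ∀ s ∈ I, w s ≠ 0)
    (hW0 : ∀ s ∈ I, wt' s * w s - w' s * wt s ≠ 0)
    (hconstraint : ∀ s ∈ I,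
      q s * (q'' s + 2 * p' s * q s + 5 * q' s * p s + 6 * (p s) ^ 2 * q s)
        + c₁ * (q' s + 2 * p s * q s) ^ 2 - c₂ * (q s) ^ 3 = 0)
    (hg : ∀ s ∈ I, g s = w s * w' s / (wt' s * w s - w' s * wt s))
    (hdg : ∀ s ∈ I, HasDerivAt g (dg s) s)
    (hg1 : ∀ s ∈ I, g1 s = (w s) ^ 2 / (wt' s * w s - w' s * wt s) * dg s)
    (hdg1 : ∀ s ∈ I, HasDerivAt g1 (dg1 s) s)
    (hg2 : ∀ s ∈ I, g2 s = (w s) ^ 2 / (wt' s * w s - w' s * wt s) * dg1 s)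
    (hdg2 : ∀ s ∈ I, HasDerivAt g2 (dg2 s) s)
    (hg3 : ∀ s ∈ I, g3 s = (w s) ^ 2 / (wt' s * w s - w' s * wt s) * dg2 s) :
    ∀ s ∈ I,
      (g1 s - (g s) ^ 2) *
          (g3 s - 12 * g s * g2 s - 6 * (g1 s) ^ 2
            + 48 * (g s) ^ 2 * g1 s - 24 * (g s) ^ 4)
        + c₁ * (g2 s - 6 * g s * g1 s + 4 * (g s) ^ 3) ^ 2
        + c₂ * (g1 s - (g s) ^ 2) ^ 3 = 0 :=
  abel_linearisation_third_order_ode_general c₁ c₂ I hI p p' q q' q'' w w' w'' wt wt' wt'' g dg g1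
    dg1 g2 dg2 g3 hp hq hq' hw hw' hwt hwt' hODEw hODEwt hw0 hW0 hconstraint hg hdg hg1 hdg1 hg2
    hdg2 hg3
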